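/- The fixed space F_n = {x ∈ 𝒯_n : x·σ = x for all σ ∈ S_n} of the S_n-action on 𝒯_n equals the k-linear span of the orbit sums O_C, where C ranges over the compositions of n, and F_n is closed under the composition product ∘; thus (F_n, ∘) is an associative unital k-algebra with unit O_{(n)} = 1_{([n])}. -/

import Mathlib

/-!
Twisted descent algebras and the Solomon-Tits algebra (Patras-Schocker).

* A *packed sequence* is a finite sequence of pairwise disjoint nonempty
  finite subsets of ℕ.
* `TD k` is the free twisted descent algebra `𝒯`: the free `k`-module with
  basis `1_w`, `w` a packed sequence.
* `convL` is the convolution product `∗`, `compL` the composition product `∘`,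
  `deltaL` the coproduct `δ`.
* `TD k` also realizes the free twisted bialgebra `ℬ` (whose basis words
  `α_{S_1}⋯α_{S_k}` are exactly the packed sequences); `Tmap u` realizes the
  convolution `1_{U_1} ∗ ⋯ ∗ 1_{U_l}` of characteristic maps as an
  endomorphism of `ℬ`; `BS k S` is the graded piece `ℬ_S` with concatenation
  `mulInto` and deconcatenation `deltaInto`.
-/

open scoped TensorProduct

noncomputable section
namespace TwistedDescent

/-- A sequence of finite subsets of `ℕ`. -/
abbrev PSeq : Type := List (Finset ℕ)

/-- A packed sequence: a finite sequence of pairwise disjoint nonempty finite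
subsets of `ℕ`. -/
def Packed (w : PSeq) : Prop :=
  w.Pairwise (fun S T => Disjoint S T) ∧ ∀ S ∈ w, S ≠ ∅

instance : DecidablePred Packed := fun w => by unfold Packed; infer_instance

/-- The type of packed sequences. -/
abbrev PackedSeq : Type := {w : PSeq // Packed w}

/-- The free twisted descent algebra `𝒯`: the free `k`-module with basis the
packed sequences.  (The same module realizes the free twisted bialgebra `ℬ`,
whose basis words are the packed sequences.) -/
abbrev TD (k : Type) [CommRing k] : Type := PackedSeq →₀ k

variable (k : Type) [CommRing k]

/-- The basis element `1_l` of `𝒯` if `l` is packed, and `0` otherwise. -/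
def mk (l : PSeq) : TD k := if h : Packed l then Finsupp.single ⟨l, h⟩ 1 else 0

/-- The union `S_1 ∪ ⋯ ∪ S_k` of the members of a sequence of sets. -/
def unionOf (w : PSeq) : Finset ℕ := w.foldr (· ∪ ·) ∅

/-- The convolution product `∗` on `𝒯`, as a bilinear map:
`1_{(S_1,…,S_n)} ∗ 1_{(T_1,…,T_m)} = 1_{(S_1,…,S_n,T_1,…,T_m)}` if all the sets
are pairwise disjoint, and `0` otherwise. -/
def convL : TD k →ₗ[k] TD k →ₗ[k] TD k :=
  Finsupp.lsum k fun w => LinearMap.toSpanSingleton k _ <|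
    Finsupp.lsum k fun v => LinearMap.toSpanSingleton k _ (mk k (w.1 ++ v.1))

/-- The refinement `(S_1∩T_1,…,S_1∩T_k,…,S_n∩T_1,…,S_n∩T_k)` of two sequences,
with all empty intersections deleted. -/
def refines (w v : PSeq) : PSeq :=
  w.flatMap fun S => (v.map fun U => S ∩ U).filter fun U => U ≠ ∅

/-- The composition product on basis elements: `0` if the underlying sets
differ, and the refinement otherwise. -/
def compB (w v : PSeq) : TD k :=
  if unionOf w = unionOf v then mk k (refines w v) else 0

/-- The composition product `∘` on `𝒯`, as a bilinear map. -/
def compL : TD k →ₗ[k] TD k →ₗ[k] TD k :=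
  Finsupp.lsum k fun w => LinearMap.toSpanSingleton k _ <|
    Finsupp.lsum k fun v => LinearMap.toSpanSingleton k _ (compB k w.1 v.1)

instance : Zero (TD k ⊗[k] TD k) :=
  (inferInstance : AddZeroClass (TD k ⊗[k] TD k)).toZero

/-- All ways of splitting each block `S_i` of `w` into an ordered pair
`(T_i, U_i)` with `S_i = T_i ⊔ U_i`. -/
def splittings (w : PSeq) : List (List (Finset ℕ × Finset ℕ)) :=
  (w.map fun S => S.powerset.toList.map fun U => (U, S \ U)).sections

/-- Delete all empty sets from a sequence. -/
def strip (l : PSeq) : PSeq := l.filter fun S => S ≠ ∅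

/-- The coproduct on a basis element:
`δ(1_{(S_1,…,S_k)}) = Σ 1_{(T_1,…,T_k)^} ⊗ 1_{(U_1,…,U_k)^}` summed over all
ways of writing `S_i = T_i ⊔ U_i`, where `^` deletes empty sets. -/
def deltaB (w : PackedSeq) : TD k ⊗[k] TD k :=
  ((splittings w.1).map fun p =>
    (mk k (strip (p.map Prod.fst)) ⊗ₜ[k] mk k (strip (p.map Prod.snd)) :
      TD k ⊗[k] TD k)).sum

/-- The coproduct `δ : 𝒯 → 𝒯 ⊗ 𝒯`. -/
def deltaL : TD k →ₗ[k] TD k ⊗[k] TD k :=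
  Finsupp.lsum k fun w => LinearMap.toSpanSingleton k _ (deltaB k w)

/-- The componentwise convolution `∗₂` on `𝒯 ⊗ 𝒯`:
`(a⊗b) ∗₂ (c⊗d) = (a∗c)⊗(b∗d)`. -/
def conv2 : TD k ⊗[k] TD k →ₗ[k] TD k ⊗[k] TD k →ₗ[k] TD k ⊗[k] TD k :=
  (TensorProduct.homTensorHomMap (RingHom.id k) _ _ _ _).comp
    (TensorProduct.map (convL k) (convL k))

/-- The componentwise composition `∘₂` on `𝒯 ⊗ 𝒯`:
`(a⊗b) ∘₂ (c⊗d) = (a∘c)⊗(b∘d)`. -/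
def comp2 : TD k ⊗[k] TD k →ₗ[k] TD k ⊗[k] TD k →ₗ[k] TD k ⊗[k] TD k :=
  (TensorProduct.homTensorHomMap (RingHom.id k) _ _ _ _).comp
    (TensorProduct.map (compL k) (compL k))

/-- The linear map `μ : 𝒯 ⊗ 𝒯 → 𝒯` induced by the convolution product. -/
def muL : TD k ⊗[k] TD k →ₗ[k] TD k := TensorProduct.lift (convL k)

/-- The submodule `𝒯_S` of `𝒯` spanned by the basis elements `1_w` with `w` an
ordered partition of `S`. -/
def TS (S : Finset ℕ) : Submodule k (TD k) :=
  Submodule.span k {x | ∃ w : PackedSeq, unionOf w.1 = S ∧ x = Finsupp.single w 1}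

/-- The blocks of `w` contained in `U_1`, in their original relative order,
then those contained in `U_2`, and so on. -/
def reorder (u w : PSeq) : PSeq := u.flatMap fun U => w.filter fun S => S ⊆ U

/-- Action of `T_u = 1_{U_1} ∗ ⋯ ∗ 1_{U_l}` on a basis word of `ℬ`: the word is
killed unless it has degree `∪ U_j` and each of its blocks is contained in some
`U_j`, in which case the blocks are regrouped along `u`. -/
def TmapB (u : PSeq) (w : PackedSeq) : TD k :=
  if unionOf w.1 = unionOf u ∧ ∀ S ∈ w.1, ∃ U ∈ u, S ⊆ U then mk k (reorder u w.1)
  else 0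

/-- The endomorphism `T_u = 1_{U_1} ∗ ⋯ ∗ 1_{U_l}` of the free twisted
bialgebra `ℬ`. -/
def Tmap (u : PSeq) : Module.End k (TD k) :=
  Finsupp.lsum k fun w => LinearMap.toSpanSingleton k _ (TmapB k u w)

/-- Ordered partitions of the finite set `S`. -/
def OrdPart (S : Finset ℕ) : Type := {w : PSeq // Packed w ∧ unionOf w = S}

/-- The graded component `ℬ_S`: the free `k`-module on the ordered partitions
of `S`. -/
abbrev BS (S : Finset ℕ) : Type := OrdPart S →₀ k

/-- Basis element of `ℬ_S`, or `0` if `l` is not an ordered partition of `S`. -/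
def mkS (S : Finset ℕ) (l : PSeq) : BS k S :=
  if h : Packed l ∧ unionOf l = S then Finsupp.single ⟨l, h⟩ 1 else 0

instance (S S' : Finset ℕ) : Zero (BS k S ⊗[k] BS k S') :=
  (inferInstance : AddZeroClass (BS k S ⊗[k] BS k S')).toZero

/-- Concatenation `m_{U,V} : ℬ_U ⊗ ℬ_V → ℬ_S` (nonzero only when `U ⊔ V = S`),
as a bilinear map. -/
def mulInto (U V S : Finset ℕ) : BS k U →ₗ[k] BS k V →ₗ[k] BS k S :=
  Finsupp.lsum k fun w => LinearMap.toSpanSingleton k _ <|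
    Finsupp.lsum k fun v => LinearMap.toSpanSingleton k _ (mkS k S (w.1 ++ v.1))

/-- Deconcatenation `δ_{U,V} : ℬ_S → ℬ_U ⊗ ℬ_V` (intended for `S = U ⊔ V`):
a basis word goes to `w_U ⊗ w_V` if each of its blocks is contained in `U` or
in `V`, where `w_U` (resp. `w_V`) is the subsequence of blocks contained in `U`
(resp. `V`), and to `0` otherwise. -/
def deltaInto (S U V : Finset ℕ) : BS k S →ₗ[k] BS k U ⊗[k] BS k V :=
  Finsupp.lsum k fun w => LinearMap.toSpanSingleton k _ <|
    if ∀ B ∈ w.1, B ⊆ U ∨ B ⊆ V then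
      mkS k U (w.1.filter fun B => B ⊆ U) ⊗ₜ[k] mkS k V (w.1.filter fun B => B ⊆ V)
    else 0

/-- Graded endomorphisms of `ℬ`: families `(f_S)_S` of endomorphisms of the
graded components `ℬ_S`. -/
abbrev GEnd : Type := (S : Finset ℕ) → Module.End k (BS k S)

/-- The convolution of graded endomorphisms:
`(f∗g)_S = Σ_{U ⊔ V = S} m_{U,V} ∘ (f_U ⊗ g_V) ∘ δ_{U,V}`. -/
def gconv (f g : GEnd k) : GEnd k := fun S =>
  ∑ U ∈ S.powerset,
    (TensorProduct.lift (mulInto k U (S \ U) S)).comp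
      ((TensorProduct.map (f U) (g (S \ U))).comp (deltaInto k S U (S \ U)))

/-- The characteristic map `1_∅`: the identity on `ℬ_∅` and `0` on `ℬ_S` for
`S ≠ ∅`. -/
def gone : GEnd k := fun S => if S = ∅ then LinearMap.id else 0

/-- `1_C(S)`: the sum of all `1_w`, `w` an ordered partition of `S` of
type `C`. -/
def oneC (C : List ℕ) (S : Finset ℕ) : TD k :=
  ∑ᶠ w : PackedSeq,
    if unionOf w.1 = S ∧ w.1.map Finset.card = C then Finsupp.single w (1 : k) else 0

/-- The composition obtained by reading a matrix of nonnegative integers row by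
row and deleting all zero entries. -/
def matComp {r c : ℕ} (a : Fin r → Fin c → ℕ) : List ℕ :=
  (List.finRange r).flatMap fun i =>
    ((List.finRange c).map fun j => a i j).filter fun m => m ≠ 0

/-- `σ` is a permutation of `[n] = {1,…,n}`: it fixes everything outside
`{1,…,n}` (and hence permutes `{1,…,n}`). -/
def IsPermOn (n : ℕ) (σ : Equiv.Perm ℕ) : Prop := ∀ m ∉ Finset.Icc 1 n, σ m = m

/-- The sequence `({σ(1)},…,{σ(n)})` of singletons, written `1_σ` in `𝒯`. -/
def permList (n : ℕ) (σ : Equiv.Perm ℕ) : PSeq :=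
  (List.range n).map fun i => {σ (i + 1)}

/-- An ordered partition `(S_1,…,S_k)` is increasing if `s < s'` whenever
`s ∈ S_i`, `s' ∈ S_j` and `i < j`. -/
def Increasing (w : PSeq) : Prop := w.Pairwise fun S T => ∀ s ∈ S, ∀ t ∈ T, s < t

/-- `σ` is a shuffle of `(S_1,…,S_k)`: the elements of each `S_i` occur in
increasing order in the sequence `(σ(1),…,σ(n))`. -/
def IsShuffle (n : ℕ) (w : PSeq) (σ : Equiv.Perm ℕ) : Prop :=
  ∀ S ∈ w, ∀ i j : ℕ, 1 ≤ i → i < j → j ≤ n → σ i ∈ S → σ j ∈ S → σ i < σ j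

/-- The descent set `D(τ) = {i | 1 ≤ i ≤ n-1, τ(i) > τ(i+1)}` of a permutation
of `[n]`. -/
def Des (n : ℕ) (τ : Equiv.Perm ℕ) : Set ℕ := {i | 1 ≤ i ∧ i < n ∧ τ (i + 1) < τ i}

/-- The right action of a permutation `σ`:
`1_{(S_1,…,S_k)}·σ = 1_{(σ⁻¹(S_1),…,σ⁻¹(S_k))}`, extended linearly. -/
def actL (σ : Equiv.Perm ℕ) : TD k →ₗ[k] TD k :=
  Finsupp.lsum k fun w =>
    LinearMap.toSpanSingleton k _ (mk k (w.1.map fun S => S.image ⇑σ⁻¹))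

/-- The fixed space `F_n` of the `S_n`-action on `𝒯_n`. -/
def Fnset (k : Type) [CommRing k] (n : ℕ) : Set (TD k) :=
  {x | x ∈ TS k (Finset.Icc 1 n) ∧
    ∀ σ : Equiv.Perm ℕ, IsPermOn n σ → actL k σ x = x}

set_option linter.dupNamespace false

section ListLemmas

lemma unionOf_cons (S : Finset ℕ) (t : PSeq) : unionOf (S :: t) = S ∪ unionOf t := rfl

lemma subset_unionOf {w : PSeq} {S : Finset ℕ} (h : S ∈ w) : S ⊆ unionOf w := by
  induction w with
  | nil => simp at h
  | cons B t ih =>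
    rw [List.mem_cons] at h
    rcases h with h | h
    · exact h ▸ Finset.subset_union_left
    · exact (ih h).trans Finset.subset_union_right

lemma mem_unionOf {m : ℕ} {w : PSeq} : m ∈ unionOf w ↔ ∃ S ∈ w, m ∈ S := by
  induction w with
  | nil => simp [unionOf]
  | cons B t ih => simp [unionOf_cons, ih]

lemma unionOf_append (a b : PSeq) : unionOf (a ++ b) = unionOf a ∪ unionOf b := by
  induction a with
  | nil => simp [unionOf]
  | cons B t ih => simp [unionOf_cons, ih, Finset.union_assoc]

lemma unionOf_filter_ne (l : PSeq) :
    unionOf (l.filter fun U => U ≠ ∅) = unionOf l := by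
  induction l with
  | nil => rfl
  | cons B t ih =>
    rw [List.filter_cons]
    by_cases hB : B = ∅
    · rw [if_neg (by simp [hB]), ih, unionOf_cons, hB, Finset.empty_union]
    · rw [if_pos (by simp [hB]), unionOf_cons, ih, unionOf_cons]

lemma unionOf_map_inter (S : Finset ℕ) (v : PSeq) :
    unionOf (v.map fun U => S ∩ U) = S ∩ unionOf v := by
  induction v with
  | nil => simp [unionOf]
  | cons B t ih => simp [unionOf_cons, ih, Finset.inter_union_distrib_left]

lemma unionOf_refines (w v : PSeq) : unionOf (refines w v) = unionOf w ∩ unionOf v := by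
  induction w with
  | nil => simp [refines, unionOf]
  | cons B t ih =>
    rw [refines, List.flatMap_cons, unionOf_append]
    rw [refines] at ih
    rw [ih, unionOf_filter_ne, unionOf_map_inter, unionOf_cons,
      Finset.union_inter_distrib_right]

lemma unionOf_map_image (f : ℕ → ℕ) (w : PSeq) :
    unionOf (w.map (Finset.image f)) = (unionOf w).image f := by
  induction w with
  | nil => simp [unionOf]
  | cons B t ih => simp [unionOf_cons, ih, Finset.image_union]

lemma disjoint_unionOf {B : Finset ℕ} {t : PSeq} (h : ∀ T ∈ t, Disjoint B T) :
    Disjoint B (unionOf t) := by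
  induction t with
  | nil => simp [unionOf]
  | cons C t ih =>
    rw [unionOf_cons, Finset.disjoint_union_right]
    exact ⟨h C (by simp), ih fun T hT => h T (by simp [hT])⟩

lemma sum_card {l : PSeq} (h : l.Pairwise (fun S T => Disjoint S T)) :
    (l.map Finset.card).sum = (unionOf l).card := by
  induction l with
  | nil => simp [unionOf]
  | cons B t ih =>
    rw [List.pairwise_cons] at h
    rw [List.map_cons, List.sum_cons, unionOf_cons,
      Finset.card_union_of_disjoint (disjoint_unionOf h.1), ih h.2]

lemma length_le_sum (l : List ℕ) (h : ∀ i ∈ l, 0 < i) : l.length ≤ l.sum := by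
  induction l with
  | nil => simp
  | cons a t ih =>
    simp only [List.length_cons, List.sum_cons]
    have := h a (by simp)
    have := ih fun i hi => h i (by simp [hi])
    omega

end ListLemmas
section Action

lemma packed_map_image (f : ℕ → ℕ) (hf : Function.Injective f) {w : PSeq} :
    Packed (w.map (Finset.image f)) ↔ Packed w := by
  unfold Packed
  rw [List.pairwise_map]
  simp only [List.forall_mem_map]
  constructor
  · rintro ⟨h1, h2⟩
    refine ⟨h1.imp fun h => ?_, fun S hS => ?_⟩
    · exact (Finset.disjoint_image hf).1 h
    · intro hS0
      exact h2 S hS (by simp [hS0])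
  · rintro ⟨h1, h2⟩
    refine ⟨h1.imp fun h => (Finset.disjoint_image hf).2 h, fun S hS h0 => ?_⟩
    exact h2 S hS (Finset.image_eq_empty.1 h0)

lemma actL_mk (σ : Equiv.Perm ℕ) (l : PSeq) :
    actL k σ (mk k l) = mk k (l.map fun S => S.image ⇑σ⁻¹) := by
  by_cases h : Packed l
  · rw [mk, dif_pos h, actL, Finsupp.lsum_single, LinearMap.toSpanSingleton_apply,
      one_smul]
  · have h2 : ¬ Packed (l.map fun S => S.image ⇑σ⁻¹) :=
      mt (packed_map_image _ (Equiv.injective _)).1 h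
    rw [mk, dif_neg h, map_zero, mk, dif_neg h2]

def actEquiv (σ : Equiv.Perm ℕ) : PackedSeq ≃ PackedSeq where
  toFun w := ⟨w.1.map fun S => S.image ⇑σ⁻¹,
    (packed_map_image _ (Equiv.injective _) ).2 w.2⟩
  invFun w := ⟨w.1.map fun S => S.image ⇑σ,
    (packed_map_image _ (Equiv.injective _)).2 w.2⟩
  left_inv w := by
    apply Subtype.ext
    show List.map _ (List.map _ _) = _
    rw [List.map_map,
      show ((fun S => Finset.image (⇑σ) S) ∘ fun S => Finset.image (⇑σ⁻¹) S) = id from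
        funext fun S => by simp [Finset.image_image, Function.comp_def], List.map_id]
  right_inv w := by
    apply Subtype.ext
    show List.map _ (List.map _ _) = _
    rw [List.map_map,
      show ((fun S => Finset.image (⇑σ⁻¹) S) ∘ fun S => Finset.image (⇑σ) S) = id from
        funext fun S => by simp [Finset.image_image, Function.comp_def], List.map_id]

lemma actL_single (σ : Equiv.Perm ℕ) (w : PackedSeq) (c : k) :
    actL k σ (Finsupp.single w c) = Finsupp.single (actEquiv σ w) c := by
  rw [actL, Finsupp.lsum_single, LinearMap.toSpanSingleton_apply, mk,
    dif_pos ((packed_map_image _ (Equiv.injective _)).2 w.2)]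
  rw [Finsupp.smul_single, smul_eq_mul, mul_one]
  rfl

lemma actL_apply (σ : Equiv.Perm ℕ) (x : TD k) (w : PackedSeq) :
    actL k σ x (actEquiv σ w) = x w := by
  induction x using Finsupp.induction_linear with
  | zero => simp
  | add f g hf hg => simp [hf, hg]
  | single v c =>
    rw [actL_single]
    simp [Finsupp.single_apply, EmbeddingLike.apply_eq_iff_eq]

lemma actL_apply' (σ : Equiv.Perm ℕ) (x : TD k) (v : PackedSeq) :
    actL k σ x v = x ((actEquiv σ).symm v) := by
  conv_lhs => rw [← (actEquiv σ).apply_symm_apply v]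
  rw [actL_apply]

end Action
section TSchar

lemma TS_eq_supported (S : Finset ℕ) :
    TS k S = Finsupp.supported k k {w : PackedSeq | unionOf w.1 = S} := by
  rw [Finsupp.supported_eq_span_single, TS]
  congr 1
  ext x
  constructor
  · rintro ⟨w, hw, rfl⟩
    exact ⟨w, hw, rfl⟩
  · rintro ⟨w, hw, rfl⟩
    exact ⟨w, hw, rfl⟩

lemma mem_TS {S : Finset ℕ} {x : TD k} :
    x ∈ TS k S ↔ ∀ w : PackedSeq, x w ≠ 0 → unionOf w.1 = S := by
  rw [TS_eq_supported, Finsupp.mem_supported']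
  constructor
  · intro h w hw
    by_contra h2
    exact hw (h w h2)
  · intro h w hw
    by_contra h2
    exact hw (h w h2)

lemma single_mem_TS {S : Finset ℕ} {w : PackedSeq} (h : unionOf w.1 = S) (c : k) :
    Finsupp.single w c ∈ TS k S := by
  rw [mem_TS]
  intro v hv
  rw [Finsupp.single_apply] at hv
  by_cases hwv : w = v
  · exact hwv ▸ h
  · simp [hwv] at hv

end TSchar

section CompL

lemma compL_single (w v : PackedSeq) (c d : k) :
    compL k (Finsupp.single w c) (Finsupp.single v d) = (c * d) • compB k w.1 v.1 := by
  rw [compL, Finsupp.lsum_single, LinearMap.toSpanSingleton_apply]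
  rw [LinearMap.smul_apply, Finsupp.lsum_single, LinearMap.toSpanSingleton_apply]
  rw [smul_smul]

lemma filter_inter_map_image (σ : Equiv.Perm ℕ) (B : Finset ℕ) (v : PSeq) :
    ((v.map (Finset.image ⇑σ)).map fun U => (B.image ⇑σ) ∩ U).filter (fun U => U ≠ ∅)
      = ((v.map fun U => B ∩ U).filter (fun U => U ≠ ∅)).map (Finset.image ⇑σ) := by
  induction v with
  | nil => simp
  | cons U s ihv =>
    rw [List.map_cons, List.map_cons, List.map_cons,
      ← Finset.image_inter _ _ (Equiv.injective σ), List.filter_cons, List.filter_cons]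
    by_cases h0 : B ∩ U = ∅
    · rw [if_neg (by simp [Finset.image_eq_empty, h0]), if_neg (by simp [h0]), ihv]
    · rw [if_pos (by simp [Finset.image_eq_empty, h0]), if_pos (by simp [h0]),
        List.map_cons, ihv]

lemma refines_map_image (σ : Equiv.Perm ℕ) (w v : PSeq) :
    refines (w.map (Finset.image ⇑σ)) (v.map (Finset.image ⇑σ))
      = (refines w v).map (Finset.image ⇑σ) := by
  induction w with
  | nil => simp [refines]
  | cons B t ih =>
    simp only [refines, List.map_cons, List.flatMap_cons, List.map_append] at ih ⊢
    rw [ih]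
    congr 1
    exact filter_inter_map_image σ B v

lemma compB_equivariant (σ : Equiv.Perm ℕ) (w v : PSeq) :
    actL k σ (compB k w v)
      = compB k (w.map fun S => S.image ⇑σ⁻¹) (v.map fun S => S.image ⇑σ⁻¹) := by
  rw [compB, compB]
  have himg : ∀ l : PSeq, unionOf (l.map fun S => S.image ⇑σ⁻¹) = (unionOf l).image ⇑σ⁻¹ :=
    fun l => unionOf_map_image _ l
  by_cases h : unionOf w = unionOf v
  · rw [if_pos h, if_pos (by rw [himg, himg, h]), actL_mk, refines_map_image]
  · rw [if_neg h, if_neg (fun hc => h ?_), map_zero]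
    rw [himg, himg] at hc
    exact Finset.image_injective (Equiv.injective _) hc

lemma compL_equivariant (σ : Equiv.Perm ℕ) (x y : TD k) :
    actL k σ (compL k x y) = compL k (actL k σ x) (actL k σ y) := by
  induction x using Finsupp.induction_linear with
  | zero => simp
  | add f g hf hg => simp [map_add, LinearMap.add_apply, hf, hg]
  | single w c =>
    induction y using Finsupp.induction_linear with
    | zero => simp
    | add f g hf hg => simp [map_add, hf, hg]
    | single v d =>
      rw [compL_single, actL_single, actL_single, compL_single, map_smul,
        compB_equivariant]
      rfl

end CompL
section Closure

lemma compB_mem_TS {S : Finset ℕ} {w v : PSeq} (hw : unionOf w = S) (hv : unionOf v = S) :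
    compB k w v ∈ TS k S := by
  rw [compB, if_pos (hw.trans hv.symm), mk]
  split
  · next h =>
    exact single_mem_TS k (by rw [unionOf_refines, hw, hv, Finset.inter_self]) 1
  · exact Submodule.zero_mem _

lemma compL_mem_TS {S : Finset ℕ} {x y : TD k} (hx : x ∈ TS k S) (hy : y ∈ TS k S) :
    compL k x y ∈ TS k S := by
  rw [TS] at hx hy
  induction hx using Submodule.span_induction with
  | zero => simp
  | add a b _ _ ha hb => rw [map_add, LinearMap.add_apply]; exact Submodule.add_mem _ ha hb
  | smul c a _ ha => rw [map_smul, LinearMap.smul_apply]; exact Submodule.smul_mem _ c ha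
  | mem a hmem =>
    obtain ⟨w, hw, rfl⟩ := hmem
    induction hy using Submodule.span_induction with
    | zero => simp
    | add a b _ _ ha hb => rw [map_add]; exact Submodule.add_mem _ ha hb
    | smul c a _ ha => rw [map_smul]; exact Submodule.smul_mem _ c ha
    | mem b hmem2 =>
      obtain ⟨v, hv, rfl⟩ := hmem2
      rw [compL_single, one_mul, one_smul]
      exact compB_mem_TS k hw hv

end Closure

section PermOn

variable {n : ℕ}

lemma isPermOn_inv {σ : Equiv.Perm ℕ} (h : IsPermOn n σ) : IsPermOn n σ⁻¹ := by
  intro m hm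
  have := h m hm
  conv_lhs => rw [← this]
  simp

lemma image_Icc {σ : Equiv.Perm ℕ} (h : IsPermOn n σ) :
    (Finset.Icc 1 n).image ⇑σ = Finset.Icc 1 n := by
  apply Finset.eq_of_subset_of_card_le
  · intro m hm
    simp only [Finset.mem_image] at hm
    obtain ⟨a, ha, rfl⟩ := hm
    by_contra hc
    have := h _ hc
    rw [Equiv.apply_eq_iff_eq] at this
    exact hc (by rw [this]; exact ha)
  · rw [Finset.card_image_of_injective _ (Equiv.injective σ)]

lemma unionOf_image_eq_iff {σ : Equiv.Perm ℕ} (h : IsPermOn n σ) (w : PSeq) :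
    unionOf (w.map fun S => S.image ⇑σ) = Finset.Icc 1 n ↔
      unionOf w = Finset.Icc 1 n := by
  rw [show (fun S => Finset.image (⇑σ) S) = Finset.image ⇑σ from rfl, unionOf_map_image]
  constructor
  · intro he
    have := congrArg (Finset.image ⇑σ⁻¹) he
    rw [Finset.image_image, image_Icc (isPermOn_inv h)] at this
    rw [← this]
    rw [show (⇑σ⁻¹ ∘ ⇑σ) = id from funext fun m => by simp, Finset.image_id]
  · intro he
    rw [he, image_Icc h]

end PermOn
section Finiteness

lemma finite_OP (S : Finset ℕ) : {w : PackedSeq | unionOf w.1 = S}.Finite := by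
  have hfin : {l : List ↥(S.powerset) | l.length ≤ S.card}.Finite :=
    List.finite_length_le _ _
  have himg := hfin.image (fun l => l.map Subtype.val)
  have hsub : {l : PSeq | Packed l ∧ unionOf l = S} ⊆
      (fun l : List ↥(S.powerset) => l.map Subtype.val) '' {l | l.length ≤ S.card} := by
    rintro l ⟨hp, hu⟩
    have hmem : ∀ T ∈ l, T ∈ S.powerset := fun T hT => by
      rw [Finset.mem_powerset, ← hu]; exact subset_unionOf hT
    refine ⟨l.attach.map fun T => ⟨T.1, hmem T.1 T.2⟩, ?_, ?_⟩
    · simp only [Set.mem_setOf_eq, List.length_map, List.length_attach]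
      calc l.length ≤ (l.map Finset.card).sum := by
            rw [← List.length_map Finset.card]
            exact length_le_sum _ (by
              simp only [List.mem_map]
              rintro i ⟨T, hT, rfl⟩
              exact Finset.card_pos.2 (Finset.nonempty_iff_ne_empty.2 (hp.2 T hT)))
        _ = S.card := by rw [sum_card hp.1, hu]
    · simp [List.map_map]
  have : {l : PSeq | Packed l ∧ unionOf l = S}.Finite := himg.subset hsub
  have := this.preimage (f := fun w : PackedSeq => w.1) (Subtype.val_injective.injOn)
  apply this.subset
  rintro w hw
  exact ⟨w.2, hw⟩

lemma oneC_apply (C : List ℕ) (S : Finset ℕ) (v : PackedSeq) :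
    oneC k C S v = if unionOf v.1 = S ∧ v.1.map Finset.card = C then 1 else 0 := by
  classical
  rw [oneC]
  rw [finsum_eq_finset_sum_of_support_subset _
    (s := (finite_OP S).toFinset) (by
      intro w hw
      simp only [Function.mem_support, ne_eq] at hw
      simp only [Set.Finite.coe_toFinset, Set.mem_setOf_eq]
      by_contra hc
      apply hw
      rw [if_neg]
      intro ⟨h1, h2⟩
      exact hc h1)]
  rw [Finset.sum_apply']
  rw [Finset.sum_eq_single v]
  · split
    · simp
    · rfl
  · intro b _ hb
    split
    · rw [Finsupp.single_apply, if_neg hb]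
    · simp
  · intro hv
    rw [Set.Finite.mem_toFinset] at hv
    rw [if_neg]
    · simp
    · intro ⟨h1, _⟩
      exact hv h1

end Finiteness
section ExistsPerm

lemma forall₂_imp_mem {α β : Type*} {R S : α → β → Prop} :
    ∀ {l1 : List α} {l2 : List β}, List.Forall₂ R l1 l2 →
      (∀ a ∈ l1, ∀ b ∈ l2, R a b → S a b) → List.Forall₂ S l1 l2 := by
  intro l1 l2 h
  induction h with
  | nil => intro; exact List.Forall₂.nil
  | cons hab htl ih =>
    intro hmem
    exact List.Forall₂.cons (hmem _ (by simp) _ (by simp) hab)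
      (ih fun a ha b hb hr => hmem a (by simp [ha]) b (by simp [hb]) hr)

lemma forall₂_card_of_map_eq :
    ∀ {a b : PSeq}, a.map Finset.card = b.map Finset.card →
      List.Forall₂ (fun S T => S.card = T.card) a b := by
  intro a
  induction a with
  | nil =>
    intro b h
    cases b with
    | nil => exact List.Forall₂.nil
    | cons U s => simp at h
  | cons B t ih =>
    intro b h
    cases b with
    | nil => simp at h
    | cons U s =>
      simp only [List.map_cons, List.cons.injEq] at h
      exact List.Forall₂.cons h.1 (ih h.2)

lemma maps_unionOf {f : ℕ → ℕ} :
    ∀ {a b : PSeq}, List.Forall₂ (fun S T => S.image f = T) a b →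
      ∀ x ∈ unionOf a, f x ∈ unionOf b := by
  intro a b h
  induction h with
  | nil => intro x hx; simp [unionOf] at hx
  | @cons B V ta tb hBV htl ih =>
    intro x hx
    rw [unionOf_cons, Finset.mem_union] at hx
    rw [unionOf_cons, Finset.mem_union]
    rcases hx with hx | hx
    · exact Or.inl (hBV ▸ Finset.mem_image_of_mem f hx)
    · exact Or.inr (ih x hx)

lemma map_of_forall₂ (σ : Equiv.Perm ℕ) :
    ∀ {a b : PSeq}, List.Forall₂ (fun S T => S.image ⇑σ = T) a b →
      b.map (fun S => S.image ⇑σ⁻¹) = a := by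
  intro a b h
  induction h with
  | nil => rfl
  | @cons B V ta tb hBV htl ih =>
    rw [List.map_cons, ih, ← hBV, Finset.image_image]
    congr 1
    rw [show (⇑σ⁻¹ ∘ ⇑σ) = id from funext fun m => by simp, Finset.image_id]

lemma exists_fun :
    ∀ (w v : PSeq), w.Pairwise (fun S T => Disjoint S T) →
      v.Pairwise (fun S T => Disjoint S T) →
      List.Forall₂ (fun S T => S.card = T.card) w v →
      ∃ f : ℕ → ℕ, Set.InjOn f ↑(unionOf w) ∧
        List.Forall₂ (fun S T => S.image f = T) w v := by
  intro w
  induction w with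
  | nil =>
    intro v _ _ ht
    cases ht
    exact ⟨id, by simp [unionOf], List.Forall₂.nil⟩
  | cons B tw ih =>
    intro v hw hv ht
    cases ht with
    | @cons _ V _ tv hBV htl =>
      rw [List.pairwise_cons] at hw hv
      obtain ⟨f1, hinj1, hfa1⟩ := ih tv hw.2 hv.2 htl
      set e := Finset.equivOfCardEq hBV with he
      classical
      set f : ℕ → ℕ := fun m => if h : m ∈ B then (e ⟨m, h⟩ : ℕ) else f1 m with hf
      have hfB : B.image f = V := by
        apply Finset.Subset.antisymm
        · intro y hy
          rw [Finset.mem_image] at hy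
          obtain ⟨x, hx, rfl⟩ := hy
          rw [hf]
          simp only [dif_pos hx]
          exact (e ⟨x, hx⟩).2
        · intro y hy
          refine Finset.mem_image.2 ⟨(e.symm ⟨y, hy⟩ : ℕ), (e.symm ⟨y, hy⟩).2, ?_⟩
          rw [hf]
          simp only [dif_pos (e.symm ⟨y, hy⟩).2]
          have h2 : (⟨(e.symm ⟨y, hy⟩ : ℕ), (e.symm ⟨y, hy⟩).2⟩ : {x // x ∈ B})
              = e.symm ⟨y, hy⟩ := rfl
          rw [h2, Equiv.apply_symm_apply]
      have htailim : List.Forall₂ (fun S T => S.image f = T) tw tv := by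
        refine forall₂_imp_mem hfa1 fun S hS T hT hr => ?_
        rw [← hr]
        apply Finset.image_congr
        intro x hx
        have hxB : x ∉ B := Finset.disjoint_right.1 (hw.1 S hS) hx
        rw [hf]
        simp only [dif_neg hxB]
      have hmaps : ∀ x ∈ unionOf tw, f x ∈ unionOf tv := maps_unionOf htailim
      refine ⟨f, ?_, List.Forall₂.cons hfB htailim⟩
      intro x hx y hy hxy
      rw [Finset.mem_coe, unionOf_cons, Finset.mem_union] at hx hy
      have hV_disj : Disjoint V (unionOf tv) := disjoint_unionOf hv.1
      by_cases hxB : x ∈ B <;> by_cases hyB : y ∈ B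
      · have h1 : f x = (e ⟨x, hxB⟩ : ℕ) := by simp only [hf, dif_pos hxB]
        have h2 : f y = (e ⟨y, hyB⟩ : ℕ) := by simp only [hf, dif_pos hyB]
        rw [h1, h2] at hxy
        have := e.injective (Subtype.coe_injective hxy)
        exact congrArg Subtype.val this
      · have hx' : f x ∈ V := hfB ▸ Finset.mem_image_of_mem f hxB
        have hy' : f y ∈ unionOf tv := hmaps y (hy.resolve_left hyB)
        rw [← hxy] at hy'
        exact absurd hy' (Finset.disjoint_left.1 hV_disj hx')
      · have hy' : f y ∈ V := hfB ▸ Finset.mem_image_of_mem f hyB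
        have hx' : f x ∈ unionOf tv := hmaps x (hx.resolve_left hxB)
        rw [hxy] at hx'
        exact absurd hx' (Finset.disjoint_left.1 hV_disj hy')
      · have h1 : f x = f1 x := by simp only [hf, dif_neg hxB]
        have h2 : f y = f1 y := by simp only [hf, dif_neg hyB]
        rw [h1, h2] at hxy
        exact hinj1 (Finset.mem_coe.2 (hx.resolve_left hxB))
          (Finset.mem_coe.2 (hy.resolve_left hyB)) hxy

lemma exists_perm {w v : PSeq} (hw : Packed w) (hv : Packed v)
    (ht : w.map Finset.card = v.map Finset.card) (hu : unionOf w = unionOf v) :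
    ∃ σ : Equiv.Perm ℕ, (∀ m ∉ unionOf w, σ m = m) ∧
      w.map (fun S => S.image ⇑σ⁻¹) = v := by
  classical
  obtain ⟨f, hinj, hfa⟩ := exists_fun v w hv.1 hw.1
    (forall₂_card_of_map_eq ht.symm)
  set S := unionOf v with hS
  have hmaps : ∀ x ∈ S, f x ∈ S := by
    intro x hx
    have := maps_unionOf hfa x hx
    rwa [hu] at this
  have himage : S.image f = S := by
    apply Finset.eq_of_subset_of_card_le
    · intro y hy
      rw [Finset.mem_image] at hy
      obtain ⟨x, hx, rfl⟩ := hy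
      exact hmaps x hx
    · rw [Finset.card_image_of_injOn hinj]
  set g : ℕ → ℕ := fun m => if m ∈ S then f m else m with hg
  have hginj : Function.Injective g := by
    intro x y hxy
    by_cases hx : x ∈ S <;> by_cases hy : y ∈ S
    · simp only [hg, if_pos hx, if_pos hy] at hxy
      exact hinj (Finset.mem_coe.2 hx) (Finset.mem_coe.2 hy) hxy
    · simp only [hg, if_pos hx, if_neg hy] at hxy
      rw [← hxy] at hy
      exact absurd (hmaps x hx) hy
    · simp only [hg, if_neg hx, if_pos hy] at hxy
      rw [hxy] at hx
      exact absurd (hmaps y hy) hx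
    · simpa only [hg, if_neg hx, if_neg hy] using hxy
  have hgsurj : Function.Surjective g := by
    intro m
    by_cases hm : m ∈ S
    · rw [← himage] at hm
      obtain ⟨x, hx, rfl⟩ := Finset.mem_image.1 hm
      exact ⟨x, by simp only [hg, if_pos hx]⟩
    · exact ⟨m, by simp only [hg, if_neg hm]⟩
  set σ := Equiv.ofBijective g ⟨hginj, hgsurj⟩ with hσ
  have hcoe : ⇑σ = g := rfl
  refine ⟨σ, ?_, ?_⟩
  · intro m hm
    rw [hu] at hm
    show g m = m
    simp only [hg, if_neg hm]
  · apply map_of_forall₂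
    refine forall₂_imp_mem hfa fun V hV W hW hr => ?_
    rw [← hr]
    apply Finset.image_congr
    intro x hx
    have hxS : x ∈ S := (subset_unionOf hV) hx
    simp only [hcoe, hg, if_pos hxS]

end ExistsPerm
section Fixed

lemma coeff_const {n : ℕ} {x : TD k} (hx : ∀ σ, IsPermOn n σ → actL k σ x = x)
    {w v : PackedSeq} (hw : unionOf w.1 = Finset.Icc 1 n)
    (hv : unionOf v.1 = Finset.Icc 1 n)
    (ht : w.1.map Finset.card = v.1.map Finset.card) : x w = x v := by
  obtain ⟨σ, hfix, hmap⟩ := exists_perm w.2 v.2 ht (hw.trans hv.symm)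
  have hperm : IsPermOn n σ := fun m hm => hfix m (by rwa [hw])
  have hwv : actEquiv σ w = v := Subtype.ext hmap
  have h2 := actL_apply k σ x w
  rw [hx σ hperm, hwv] at h2
  exact h2.symm

lemma map_card_map_image (σ : Equiv.Perm ℕ) (l : PSeq) :
    (l.map fun S => S.image ⇑σ).map Finset.card = l.map Finset.card := by
  rw [List.map_map]
  congr 1
  funext S
  exact Finset.card_image_of_injective S (Equiv.injective σ)

lemma actL_oneC {n : ℕ} {σ : Equiv.Perm ℕ} (hσ : IsPermOn n σ) (C : List ℕ) :
    actL k σ (oneC k C (Finset.Icc 1 n)) = oneC k C (Finset.Icc 1 n) := by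
  ext v
  rw [actL_apply', oneC_apply]
  have h1 : ((actEquiv σ).symm v).1 = v.1.map fun S => S.image ⇑σ := rfl
  rw [h1, oneC_apply,
    if_congr (and_congr (unionOf_image_eq_iff hσ v.1)
      (by rw [map_card_map_image])) rfl rfl]

lemma oneC_mem_TS (C : List ℕ) (S : Finset ℕ) : oneC k C S ∈ TS k S := by
  rw [mem_TS]
  intro w hw
  rw [oneC_apply] at hw
  by_cases h : unionOf w.1 = S ∧ w.1.map Finset.card = C
  · exact h.1
  · rw [if_neg h] at hw
    exact absurd rfl hw

lemma oneC_mem_Fnset (C : List ℕ) (n : ℕ) : oneC k C (Finset.Icc 1 n) ∈ Fnset k n :=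
  ⟨oneC_mem_TS k C _, fun σ hσ => actL_oneC k hσ C⟩

lemma key {n : ℕ} : ∀ (m : ℕ) (x : TD k), x ∈ Fnset k n →
    x.support.card ≤ m →
    x ∈ Submodule.span k {y : TD k | ∃ C : List ℕ,
      (∀ i ∈ C, 0 < i) ∧ C.sum = n ∧ y = oneC k C (Finset.Icc 1 n)} := by
  intro m
  induction m with
  | zero =>
    intro x _ hc
    rw [Finsupp.support_eq_empty.1 (Finset.card_eq_zero.1 (Nat.le_zero.1 hc))]
    exact Submodule.zero_mem _
  | succ m ih =>
    intro x hx hc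
    by_cases hxe : x.support = ∅
    · rw [Finsupp.support_eq_empty.1 hxe]
      exact Submodule.zero_mem _
    obtain ⟨w, hw⟩ := Finset.nonempty_iff_ne_empty.2 hxe
    have hwx : x w ≠ 0 := Finsupp.mem_support_iff.1 hw
    have hwu : unionOf w.1 = Finset.Icc 1 n := (mem_TS k).1 hx.1 w hwx
    set C := w.1.map Finset.card with hC
    have hCpos : ∀ i ∈ C, 0 < i := by
      rw [hC]
      simp only [List.mem_map]
      rintro i ⟨T, hT, rfl⟩
      exact Finset.card_pos.2 (Finset.nonempty_iff_ne_empty.2 (w.2.2 T hT))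
    have hCsum : C.sum = n := by
      rw [hC, sum_card w.2.1, hwu, Nat.card_Icc]
      omega
    set y := x - x w • oneC k C (Finset.Icc 1 n) with hy
    have hyF : y ∈ Fnset k n :=
      ⟨Submodule.sub_mem _ hx.1 (Submodule.smul_mem _ _ (oneC_mem_TS k C _)),
        fun σ hσ => by rw [map_sub, map_smul, hx.2 σ hσ, actL_oneC k hσ C]⟩
    have hyv : ∀ v : PackedSeq, y v = x v - x w *
        (if unionOf v.1 = Finset.Icc 1 n ∧ v.1.map Finset.card = C then 1 else 0) :=
      fun v => by rw [hy, Finsupp.sub_apply, Finsupp.smul_apply, oneC_apply, smul_eq_mul]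
    have hyw : y w = 0 := by
      rw [hyv w, if_pos ⟨hwu, rfl⟩, mul_one, sub_self]
    have hsub : y.support ⊆ x.support.erase w := by
      intro v hv
      have hyvne : y v ≠ 0 := Finsupp.mem_support_iff.1 hv
      refine Finset.mem_erase.2 ⟨fun hvw => hyvne (hvw ▸ hyw), ?_⟩
      rw [Finsupp.mem_support_iff]
      intro hxv
      by_cases hcond : unionOf v.1 = Finset.Icc 1 n ∧ v.1.map Finset.card = C
      · have := coeff_const k hx.2 hwu hcond.1 hcond.2.symm
        apply hyvne
        rw [hyv v, if_pos hcond, mul_one, this, hxv, sub_self]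
      · apply hyvne
        rw [hyv v, if_neg hcond, mul_zero, hxv, sub_zero]
    have hcard : y.support.card ≤ m := by
      have := Finset.card_le_card hsub
      rw [Finset.card_erase_of_mem hw] at this
      omega
    have h1 := ih y hyF hcard
    have hxy : x = y + x w • oneC k C (Finset.Icc 1 n) := by
      rw [hy, sub_add_cancel]
    rw [hxy]
    exact Submodule.add_mem _ h1
      (Submodule.smul_mem _ _ (Submodule.subset_span ⟨C, hCpos, hCsum, rfl⟩))

end Fixed
section Units

lemma packed_Icc {n : ℕ} (hn : 0 < n) : Packed [Finset.Icc 1 n] := by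
  constructor
  · exact List.pairwise_singleton _ _
  · intro S hS
    rw [List.mem_singleton] at hS
    rw [hS]
    exact (Finset.nonempty_Icc.2 hn).ne_empty

lemma oneC_single {n : ℕ} (hn : 0 < n) :
    oneC k [n] (Finset.Icc 1 n) = mk k [Finset.Icc 1 n] := by
  have hpack := packed_Icc hn
  have hu : unionOf [Finset.Icc 1 n] = Finset.Icc 1 n := by
    rw [unionOf_cons]
    simp [unionOf]
  have hcardn : ([Finset.Icc 1 n] : PSeq).map Finset.card = [n] := by
    simp [Nat.card_Icc]
  rw [oneC, mk, dif_pos hpack,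
    finsum_eq_single _ (⟨[Finset.Icc 1 n], hpack⟩ : PackedSeq) ?_, if_pos ⟨hu, hcardn⟩]
  intro w hwne
  rw [if_neg]
  obtain ⟨l, hl⟩ := w
  rintro ⟨h1, h2⟩
  cases l with
  | nil => simp at h2
  | cons B t =>
    rw [List.map_cons] at h2
    have ht : t = [] := by
      have := congrArg List.tail h2
      simp only [List.tail_cons] at this
      exact List.map_eq_nil_iff.1 this
    subst ht
    have hB : B = Finset.Icc 1 n := by
      rw [unionOf_cons] at h1
      simpa [unionOf] using h1
    exact hwne (by subst hB; rfl)

lemma filter_map_inter_self {T : Finset ℕ} :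
    ∀ (l : PSeq), (∀ S ∈ l, S ⊆ T) → (∀ S ∈ l, S ≠ ∅) →
      ((l.map fun U => T ∩ U).filter fun U => U ≠ ∅) = l := by
  intro l
  induction l with
  | nil => intros; rfl
  | cons B t ih =>
    intro h1 h2
    have hB : T ∩ B = B := Finset.inter_eq_right.2 (h1 B (by simp))
    rw [List.map_cons, hB, List.filter_cons, if_pos (by simp [h2 B (by simp)]),
      ih (fun S hS => h1 S (by simp [hS])) (fun S hS => h2 S (by simp [hS]))]

lemma refines_single_left {T : Finset ℕ} (l : PSeq) (h1 : ∀ S ∈ l, S ⊆ T)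
    (h2 : ∀ S ∈ l, S ≠ ∅) : refines [T] l = l := by
  rw [refines, List.flatMap_cons, List.flatMap_nil, List.append_nil]
  exact filter_map_inter_self l h1 h2

lemma refines_single_right {T : Finset ℕ} :
    ∀ (l : PSeq), (∀ S ∈ l, S ⊆ T) → (∀ S ∈ l, S ≠ ∅) → refines l [T] = l := by
  intro l
  induction l with
  | nil => intros; rfl
  | cons B t ih =>
    intro h1 h2
    have hB : B ∩ T = B := Finset.inter_eq_left.2 (h1 B (by simp))
    have ht := ih (fun S hS => h1 S (by simp [hS])) (fun S hS => h2 S (by simp [hS]))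
    rw [refines] at ht ⊢
    rw [List.flatMap_cons, ht,
      show (([T] : PSeq).map fun U => B ∩ U) = [B ∩ T] from rfl, hB,
      List.filter_cons, if_pos (by simp [h2 B (by simp)]), List.filter_nil,
      List.singleton_append]

lemma mk_coe (v : PackedSeq) : mk k v.1 = Finsupp.single v 1 := by
  rw [mk, dif_pos v.2]

lemma comp_unit_left {n : ℕ} (hn : 0 < n) {x : TD k}
    (hx : x ∈ TS k (Finset.Icc 1 n)) :
    compL k (mk k [Finset.Icc 1 n]) x = x := by
  have hle : TS k (Finset.Icc 1 n) ≤
      LinearMap.eqLocus (compL k (mk k [Finset.Icc 1 n])) LinearMap.id := by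
    rw [TS, Submodule.span_le]
    rintro _ ⟨v, hv, rfl⟩
    rw [SetLike.mem_coe, LinearMap.mem_eqLocus, LinearMap.id_apply,
      mk, dif_pos (packed_Icc hn), compL_single, one_mul, one_smul, compB,
      if_pos (by rw [unionOf_cons, hv]; simp [unionOf]),
      refines_single_left v.1 (fun S hS => hv ▸ subset_unionOf hS) v.2.2, mk_coe]
  have := hle hx
  rw [LinearMap.mem_eqLocus] at this
  exact this

lemma comp_unit_right {n : ℕ} (hn : 0 < n) {x : TD k}
    (hx : x ∈ TS k (Finset.Icc 1 n)) :
    compL k x (mk k [Finset.Icc 1 n]) = x := by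
  have hle : TS k (Finset.Icc 1 n) ≤
      LinearMap.eqLocus ((compL k).flip (mk k [Finset.Icc 1 n])) LinearMap.id := by
    rw [TS, Submodule.span_le]
    rintro _ ⟨v, hv, rfl⟩
    rw [SetLike.mem_coe, LinearMap.mem_eqLocus, LinearMap.id_apply, LinearMap.flip_apply,
      mk, dif_pos (packed_Icc hn), compL_single, one_mul, one_smul, compB,
      if_pos (by rw [unionOf_cons, hv]; simp [unionOf]),
      refines_single_right v.1 (fun S hS => hv ▸ subset_unionOf hS) v.2.2, mk_coe]
  have := hle hx
  rw [LinearMap.mem_eqLocus, LinearMap.flip_apply] at this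
  exact this

def FnMod (n : ℕ) : Submodule k (TD k) where
  carrier := Fnset k n
  add_mem' hx hy := ⟨Submodule.add_mem _ hx.1 hy.1, fun σ hσ => by
    rw [map_add, hx.2 σ hσ, hy.2 σ hσ]⟩
  zero_mem' := ⟨Submodule.zero_mem _, fun σ _ => map_zero _⟩
  smul_mem' c x hx := ⟨Submodule.smul_mem _ c hx.1, fun σ hσ => by
    rw [map_smul, hx.2 σ hσ]⟩

end Units

/-- The fixed space `F_n` of the `S_n`-action on `𝒯_n`
equals the span of the orbit sums `O_C`, `C` a composition of `n`, and is
closed under the composition product `∘`; `(F_n, ∘)` is an associative unital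
`k`-algebra with unit `O_{(n)} = 1_{([n])}`. -/
theorem fixed_space_eq_span_orbit_sums (k : Type) [CommRing k]
    (n : ℕ) (hn : 0 < n) :
    Fnset k n
        = (Submodule.span k {x : TD k | ∃ C : List ℕ,
            (∀ i ∈ C, 0 < i) ∧ C.sum = n ∧ x = oneC k C (Finset.Icc 1 n)} :
            Set (TD k)) ∧
    (∀ x ∈ Fnset k n, ∀ y ∈ Fnset k n, compL k x y ∈ Fnset k n) ∧
    oneC k [n] (Finset.Icc 1 n) = mk k [Finset.Icc 1 n] ∧
    (∀ x ∈ Fnset k n,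
      compL k (mk k [Finset.Icc 1 n]) x = x ∧
      compL k x (mk k [Finset.Icc 1 n]) = x) := by
  refine ⟨?_, ?_, oneC_single k hn, ?_⟩
  · apply Set.Subset.antisymm
    · intro x hx
      exact key k x.support.card x hx le_rfl
    · intro x hx
      have hle : Submodule.span k {x : TD k | ∃ C : List ℕ,
          (∀ i ∈ C, 0 < i) ∧ C.sum = n ∧ x = oneC k C (Finset.Icc 1 n)} ≤ FnMod k n := by
        rw [Submodule.span_le]
        rintro _ ⟨C, _, _, rfl⟩
        exact oneC_mem_Fnset k C n
      exact hle hx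
  · intro x hx y hy
    exact ⟨compL_mem_TS k hx.1 hy.1, fun σ hσ => by
      rw [compL_equivariant, hx.2 σ hσ, hy.2 σ hσ]⟩
  · intro x hx
    exact ⟨comp_unit_left k hn hx.1, comp_unit_right k hn hx.1⟩

end TwistedDescent
end
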